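/- For the choice $\delta_d = (d - 3/2)^{-1/2}$ (so that $\delta_d \approx 1/\sqrt{d}$ for large $d$), the token-assignment probability $p_{\delta_d} = 1 - I_{\delta_d^2}\big(\tfrac{1}{2}, \tfrac{d-1}{2}\big)$ satisfies $\lim_{d \to \infty} p_{\delta_d} = 1 - \operatorname{erf}\big(\tfrac{\sqrt{2}}{2}\big) = \frac{2}{\sqrt{\pi}}\int_{1/\sqrt{2}}^{\infty} e^{-u^2}\,du \approx 0.3$, where $I_x(a,b) = \frac{1}{B(a,b)}\int_0^x t^{a-1}(1-t)^{b-1}\,dt$ and $\operatorname{erf}(x) = \frac{2}{\sqrt{\pi}}\int_0^x e^{-u^2}du$. -/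

import Mathlib

/-!
Write `c = d - 3/2`. The substitution `t = u² / c` turns
`∫₀^{a²/c} t^{-1/2} (1 - t)^{(d-3)/2} dt` into `(2 / √c) ∫₀^a (1 - u²/c)^{(d-3)/2} du`;
take `a = 1` for the numerator and `a = √c` for the denominator, so that the prefactors cancel.
Since `(d - 3)/2 ~ c/2`, the integrand tends to `exp (-u²/2)` and is dominated by `exp (-u²/4)`,
hence the ratio tends to `∫₀^1 exp (-u²/2) / ∫₀^∞ exp (-u²/2) = erf (1/√2)`.
-/

open Filter Real MeasureTheory Set Topology

theorem one_sub_sq_div_rpow_le_exp {c q b u : ℝ} (hc : 0 < c) (hu : u ^ 2 ≤ c) (hb : 0 ≤ b)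
    (hq : b ≤ q / c) : (1 - u ^ 2 / c) ^ q ≤ exp (-b * u ^ 2) := by
  have hq0 : 0 ≤ q := by
    simpa [div_mul_cancel₀ _ hc.ne'] using mul_nonneg (hb.trans hq) hc.le
  calc (1 - u ^ 2 / c) ^ q ≤ exp (-(u ^ 2 / c)) ^ q :=
        rpow_le_rpow (sub_nonneg.2 ((div_le_one hc).2 hu)) (one_sub_le_exp_neg _) hq0
    _ = exp (-(q / c) * u ^ 2) := by rw [← exp_mul]; ring_nf
    _ ≤ exp (-b * u ^ 2) := exp_le_exp.2 (by nlinarith [sq_nonneg u])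

theorem integral_rpow_neg_half_mul_eq_integral_comp_sq_div (g : ℝ → ℝ) {c a : ℝ} (hc : 0 < c)
    (ha : 0 ≤ a) :
    ∫ t in (0:ℝ)..a ^ 2 / c, t ^ (-(1:ℝ) / 2) * g t
      = 2 / √c * ∫ u in (0:ℝ)..a, g (u ^ 2 / c) := by
  set f : ℝ → ℝ := fun u => u ^ 2 / c
  have hmono : StrictMonoOn f (Icc 0 a) := fun x hx y _ hxy =>
    div_lt_div_of_pos_right (pow_lt_pow_left₀ hxy hx.1 two_ne_zero) hc
  have himg : f '' Ioo 0 a = Ioo 0 (a ^ 2 / c) := by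
    rw [(by fun_prop : ContinuousOn f (Icc 0 a)).image_Ioo_of_strictMonoOn ha hmono]
    simp [f]
  have hderiv : ∀ u ∈ Ioo 0 a, HasDerivWithinAt f (2 * u / c) (Ioo 0 a) u := fun u _ => by
    simpa using ((hasDerivAt_pow 2 u).div_const c).hasDerivWithinAt
  rw [intervalIntegral.integral_of_le (by positivity), integral_Ioc_eq_integral_Ioo, ← himg,
    integral_image_eq_integral_abs_deriv_smul measurableSet_Ioo hderiv
      (hmono.injOn.mono Ioo_subset_Icc_self),
    intervalIntegral.integral_of_le ha, integral_Ioc_eq_integral_Ioo, ← integral_const_mul]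
  refine setIntegral_congr_fun measurableSet_Ioo fun u ⟨hu, _⟩ => ?_
  have hsqrt : (u ^ 2 / c) ^ (-(1:ℝ) / 2) = √c / u := by
    rw [neg_div, rpow_neg (by positivity), ← sqrt_eq_rpow, sqrt_div (sq_nonneg u), sqrt_sq hu.le,
      inv_div]
  have hsc : √c ^ 2 = c := sq_sqrt hc.le
  simp only [f, smul_eq_mul, hsqrt, abs_of_pos (by positivity : 0 < 2 * u / c)]
  field_simp
  rw [hsc]

theorem intervalIntegral_exp_neg_mul_sq_div_integral_gaussian_Ioi {b : ℝ} (hb : 0 < b) (a : ℝ) :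
    (∫ u in (0:ℝ)..a, exp (-b * u ^ 2)) / (∫ u in Ioi (0:ℝ), exp (-b * u ^ 2))
      = 2 / √π * ∫ v in (0:ℝ)..√b * a, exp (-v ^ 2) := by
  have hscale := intervalIntegral.integral_comp_mul_left (a := 0) (b := a)
    (fun v => exp (-v ^ 2)) (sqrt_pos.2 hb).ne'
  simp only [mul_pow, sq_sqrt hb.le, mul_zero, smul_eq_mul, ← neg_mul] at hscale
  rw [hscale, integral_gaussian_Ioi, sqrt_div' _ hb.le]
  have := sqrt_pos.2 hb
  have := sqrt_pos.2 pi_pos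
  field_simp

section DominatedConvergence

variable {ι : Type*} {l : Filter ι} {c p : ι → ℝ} {r : ℝ}

theorem tendsto_one_sub_div_rpow_exp (hc : Tendsto c l atTop)
    (hp : Tendsto (fun n => p n / c n) l (𝓝 r)) (x : ℝ) :
    Tendsto (fun n => (1 - x / c n) ^ p n) l (𝓝 (exp (-r * x))) := by
  have hpow :
      Tendsto (fun n => ((1 + -x / c n) ^ c n) ^ (p n / c n)) l (𝓝 (exp (-x) ^ r)) :=
    ((tendsto_one_add_div_rpow_exp (-x)).comp hc).rpow hp (Or.inl (exp_pos _).ne')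
  rw [← exp_mul, neg_mul_comm, mul_comm] at hpow
  refine hpow.congr' ?_
  filter_upwards [hc.eventually_ge_atTop (max 1 x)] with n hn
  have hc0 : 0 < c n := by linarith [le_max_left 1 x]
  have hbase : 0 ≤ 1 + -x / c n := by
    rw [neg_div, ← sub_eq_add_neg, sub_nonneg, div_le_one hc0]
    exact (le_max_right 1 x).trans hn
  rw [← rpow_mul hbase, mul_div_cancel₀ _ hc0.ne', neg_div, ← sub_eq_add_neg]

theorem eventually_norm_one_sub_sq_div_rpow_le (hc : Tendsto c l atTop)
    (hp : Tendsto (fun n => p n / c n) l (𝓝 r)) (hr : 0 < r) :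
    ∀ᶠ n in l, ∀ u, u ^ 2 ≤ c n → ‖(1 - u ^ 2 / c n) ^ p n‖ ≤ exp (-(r / 2) * u ^ 2) := by
  filter_upwards [hc.eventually_gt_atTop 0, hp.eventually (le_mem_nhds (half_lt_self hr))]
    with n hcn hpn u hu
  rw [norm_of_nonneg (rpow_nonneg (sub_nonneg.2 ((div_le_one hcn).2 hu)) _)]
  exact one_sub_sq_div_rpow_le_exp hcn hu (by positivity) hpn

theorem tendsto_intervalIntegral_one_sub_sq_div_rpow [l.IsCountablyGenerated]
    (hc : Tendsto c l atTop) (hp : Tendsto (fun n => p n / c n) l (𝓝 r)) (hr : 0 < r) (a : ℝ) :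
    Tendsto (fun n => ∫ u in (0:ℝ)..a, (1 - u ^ 2 / c n) ^ p n) l
      (𝓝 (∫ u in (0:ℝ)..a, exp (-r * u ^ 2))) := by
  refine intervalIntegral.tendsto_integral_filter_of_dominated_convergence
    (fun u => exp (-(r / 2) * u ^ 2))
    (.of_forall fun n => (by fun_prop : Measurable _).aestronglyMeasurable) ?_
    ((by fun_prop : Continuous _).intervalIntegrable _ _)
    (.of_forall fun u _ => tendsto_one_sub_div_rpow_exp hc hp _)
  filter_upwards [eventually_norm_one_sub_sq_div_rpow_le hc hp hr,
    hc.eventually_ge_atTop (a ^ 2)] with n hn ha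
  refine .of_forall fun u hu => hn u (le_trans ?_ ha)
  rcases mem_uIcc.1 (uIoc_subset_uIcc hu) with ⟨h0, h1⟩ | ⟨h0, h1⟩ <;> nlinarith

theorem tendsto_intervalIntegral_sqrt_one_sub_sq_div_rpow [l.IsCountablyGenerated]
    (hc : Tendsto c l atTop) (hp : Tendsto (fun n => p n / c n) l (𝓝 r)) (hr : 0 < r) :
    Tendsto (fun n => ∫ u in (0:ℝ)..√(c n), (1 - u ^ 2 / c n) ^ p n) l
      (𝓝 (∫ u in Ioi (0:ℝ), exp (-r * u ^ 2))) := by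
  have hindicator : ∀ n,
      ∫ u in Ioi 0, (Ioc 0 √(c n)).indicator (fun u => (1 - u ^ 2 / c n) ^ p n) u
        = ∫ u in (0:ℝ)..√(c n), (1 - u ^ 2 / c n) ^ p n := fun n => by
    rw [intervalIntegral.integral_of_le (sqrt_nonneg _), setIntegral_indicator measurableSet_Ioc,
      inter_eq_self_of_subset_right Ioc_subset_Ioi_self]
  refine Tendsto.congr hindicator <| tendsto_integral_filter_of_dominated_convergence
    (fun u => exp (-(r / 2) * u ^ 2))
    (.of_forall fun n =>
      ((by fun_prop : Measurable _).indicator measurableSet_Ioc).aestronglyMeasurable) ?_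
    (integrable_exp_neg_mul_sq (half_pos hr)).integrableOn ?_
  · filter_upwards [eventually_norm_one_sub_sq_div_rpow_le hc hp hr] with n hn
    refine .of_forall fun u => ?_
    by_cases hu : u ∈ Ioc 0 √(c n)
    · rw [indicator_of_mem hu]
      exact hn u ((le_sqrt' hu.1).1 hu.2)
    · rw [indicator_of_notMem hu, norm_zero]
      positivity
  · refine (ae_restrict_iff' measurableSet_Ioi).2 (.of_forall fun u (hu : 0 < u) => ?_)
    refine (tendsto_one_sub_div_rpow_exp hc hp _).congr' ?_
    filter_upwards [hc.eventually_ge_atTop (u ^ 2)] with n hn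
    rw [indicator_of_mem (show u ∈ Ioc 0 √(c n) from ⟨hu, (le_sqrt' hu).2 hn⟩)]

end DominatedConvergence

/-- For `δ_d = (d - 3/2)^{-1/2} ≈ 1/√d`, the token-assignment probability
`p_{δ_d} = 1 - I_{δ_d²}(1/2, (d-1)/2)` tends to `1 - erf(√2/2) ≈ 0.3` as `d → ∞`,
with `erf` written out in integral form (Lemma 3 and Appendix A.2). -/
theorem assignment_probability_limit :
    Tendsto (fun d : ℕ =>
        1 - (∫ t in (0:ℝ)..((d:ℝ) - 3/2)⁻¹,
              t ^ (-(1:ℝ)/2) * (1 - t) ^ (((d:ℝ) - 3)/2)) /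
            (∫ t in (0:ℝ)..1, t ^ (-(1:ℝ)/2) * (1 - t) ^ (((d:ℝ) - 3)/2)))
      atTop
      (nhds (1 - (2 / Real.sqrt π) *
        ∫ u in (0:ℝ)..(Real.sqrt 2 / 2), Real.exp (-u ^ 2))) := by
  have hc : Tendsto (fun d : ℕ => (d:ℝ) - 3 / 2) atTop atTop :=
    tendsto_atTop_add_const_right _ _ tendsto_natCast_atTop_atTop
  have hp : Tendsto (fun d : ℕ => ((d:ℝ) - 3) / 2 / ((d:ℝ) - 3 / 2)) atTop (𝓝 (1 / 2)) := by
    have h := ((tendsto_inv_atTop_zero.comp hc).const_mul (3 / 4)).const_sub (1 / 2 : ℝ)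
    rw [mul_zero, sub_zero] at h
    refine h.congr' ?_
    filter_upwards [hc.eventually_gt_atTop 0] with d hd
    simp only [Function.comp_apply]
    rw [eq_div_iff hd.ne', sub_mul, mul_assoc, inv_mul_cancel₀ hd.ne']
    ring
  have hratio := (tendsto_intervalIntegral_one_sub_sq_div_rpow hc hp one_half_pos 1).div
    (tendsto_intervalIntegral_sqrt_one_sub_sq_div_rpow hc hp one_half_pos)
    (by rw [integral_gaussian_Ioi]; positivity)
  have hsqrt_half : √(1 / 2 : ℝ) * 1 = √2 / 2 := by
    rw [mul_one, show (1 / 2 : ℝ) = 2 / 2 ^ 2 by norm_num, sqrt_div' _ (by norm_num),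
      sqrt_sq two_pos.le]
  rw [intervalIntegral_exp_neg_mul_sq_div_integral_gaussian_Ioi one_half_pos, hsqrt_half] at hratio
  refine (hratio.const_sub 1).congr' ?_
  filter_upwards [hc.eventually_gt_atTop 0] with d hd0
  have hnum := integral_rpow_neg_half_mul_eq_integral_comp_sq_div
    (fun t => (1 - t) ^ (((d:ℝ) - 3) / 2)) hd0 zero_le_one
  have hden := integral_rpow_neg_half_mul_eq_integral_comp_sq_div
    (fun t => (1 - t) ^ (((d:ℝ) - 3) / 2)) hd0 (sqrt_nonneg ((d:ℝ) - 3 / 2))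
  rw [one_pow, one_div] at hnum
  rw [sq_sqrt hd0.le, div_self hd0.ne'] at hden
  rw [Pi.div_apply, hnum, hden, mul_div_mul_left _ _ (by positivity)]
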